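/- In the n-agent moving-knife procedure, if agent 1's true density is uniform and agent 1 reports ℓ⁽ⁿ⁾ instead, then in every round before agent 1 is allocated, agent 1's mark under ℓ⁽ⁿ⁾ is weakly to the right of agent 1's mark under the uniform density; consequently agent 1 is allocated no earlier under the misreport than under truth-telling. -/

import Mathlib

/-! With `a = 1/(2n)`, so that `1/n = 2a`, the primitive of `ℓ⁽ⁿ⁾` on `[0, ∞)` is `x` plus a tent
of height `a/2` supported on `[0, 2a]`. Hence an interval `[c, t]` with `0 ≤ c` and `ℓ⁽ⁿ⁾`-mass at
least `2a` cannot end before `2a`, where the primitive stays below `2a`; and once `t ≥ 2a` its mass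
is `t - c` minus the tent at `c`, at most its length. -/

open MeasureTheory Set intervalIntegral

/-- The density `ℓ⁽ⁿ⁾`: `3/2` on `[0, 1/(2n))`, `1/2` on `[1/(2n), 1/n)`, `1` on `[1/n, 1]`. -/
noncomputable def ell (n : ℕ) : ℝ → ℝ := fun x =>
  if x < 1 / (2 * n) then 3/2 else if x < 1 / n then 1/2 else 1

noncomputable def stepDensity (a x : ℝ) : ℝ :=
  if x < a then 3/2 else if x < 2 * a then 1/2 else 1

noncomputable def stepPrimitive (a x : ℝ) : ℝ :=
  max (min (3/2 * x) (x/2 + a)) x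

lemma ell_eq_stepDensity (n : ℕ) : ell n = stepDensity (1 / (2 * n)) := by
  funext x
  rw [ell, stepDensity, show (1 : ℝ) / n = 2 * (1 / (2 * n)) by ring]

section stepPrimitive

variable {a x : ℝ}

lemma stepPrimitive_of_nonneg_of_le (h₀ : 0 ≤ x) (h : x ≤ a) : stepPrimitive a x = 3/2 * x := by
  rw [stepPrimitive, min_eq_left (by linarith), max_eq_left (by linarith)]

lemma stepPrimitive_of_le_of_le (h₁ : a ≤ x) (h₂ : x ≤ 2 * a) :
    stepPrimitive a x = x/2 + a := by
  rw [stepPrimitive, min_eq_right (by linarith), max_eq_left (by linarith)]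

lemma stepPrimitive_of_le (h : 2 * a ≤ x) : stepPrimitive a x = x :=
  max_eq_right <| (min_le_right _ _).trans (by linarith)

lemma le_stepPrimitive (a x : ℝ) : x ≤ stepPrimitive a x := le_max_right _ _

lemma stepPrimitive_lt (h : x < 2 * a) : stepPrimitive a x < 2 * a :=
  max_lt ((min_le_right _ _).trans_lt (by linarith)) h

lemma continuous_stepPrimitive (a : ℝ) : Continuous (stepPrimitive a) := by
  unfold stepPrimitive
  fun_prop

end stepPrimitive

lemma hasDerivWithinAt_Ioi_of_eqOn_Ico {f : ℝ → ℝ} {x b k m : ℝ} (hxb : x < b)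
    (hf : EqOn f (fun y ↦ k * y + m) (Ico x b)) : HasDerivWithinAt f k (Ioi x) x := by
  have hline : HasDerivWithinAt (fun y ↦ k * y + m) k (Ioi x) x := by
    simpa using (((hasDerivAt_id x).const_mul k).add_const m).hasDerivWithinAt
  refine hline.congr_of_eventuallyEq ?_ (hf ⟨le_rfl, hxb⟩)
  filter_upwards [Ioo_mem_nhdsGT hxb] with y hy
  exact hf ⟨hy.1.le, hy.2⟩

lemma hasDerivWithinAt_stepPrimitive {a x : ℝ} (hx : 0 < x) :
    HasDerivWithinAt (stepPrimitive a) (stepDensity a x) (Ioi x) x := by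
  by_cases h₁ : x < a
  · rw [stepDensity, if_pos h₁]
    refine hasDerivWithinAt_Ioi_of_eqOn_Ico (m := 0) h₁ fun y hy ↦ ?_
    rw [stepPrimitive_of_nonneg_of_le (hx.le.trans hy.1) hy.2.le]
    ring
  by_cases h₂ : x < 2 * a
  · rw [stepDensity, if_neg h₁, if_pos h₂]
    refine hasDerivWithinAt_Ioi_of_eqOn_Ico (m := a) h₂ fun y hy ↦ ?_
    rw [stepPrimitive_of_le_of_le ((not_lt.1 h₁).trans hy.1) hy.2.le]
    ring
  · rw [stepDensity, if_neg h₁, if_neg h₂]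
    refine hasDerivWithinAt_Ioi_of_eqOn_Ico (b := x + 1) (m := 0) (by linarith) fun y hy ↦ ?_
    rw [stepPrimitive_of_le ((not_lt.1 h₂).trans hy.1)]
    ring

lemma integral_stepDensity {a c t : ℝ} (hc : 0 ≤ c) (hct : c ≤ t) :
    ∫ x in c..t, stepDensity a x = stepPrimitive a t - stepPrimitive a c := by
  have hderiv : ∀ x ∈ Ioo c t,
      HasDerivWithinAt (stepPrimitive a) (stepDensity a x) (Ioi x) x :=
    fun x hx ↦ hasDerivWithinAt_stepPrimitive (hc.trans_lt hx.1)
  have hcont := (continuous_stepPrimitive a).continuousOn (s := Icc c t)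
  have hpos : ∀ x ∈ Ioo c t, 0 ≤ stepDensity a x := fun x _ ↦ by
    unfold stepDensity; split_ifs <;> norm_num
  refine integral_eq_sub_of_hasDeriv_right_of_le hct hcont hderiv ?_
  exact (intervalIntegrable_iff_integrableOn_Ioc_of_le hct).2
    (integrableOn_deriv_right_of_nonneg hcont hderiv hpos)

lemma le_sub_of_le_integral_stepDensity {a c t : ℝ} (hc : 0 ≤ c) (hct : c ≤ t)
    (hmass : 2 * a ≤ ∫ x in c..t, stepDensity a x) : 2 * a ≤ t - c := by
  rw [integral_stepDensity hc hct] at hmass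
  have hFc := le_stepPrimitive a c
  have ht : 2 * a ≤ t := by
    by_contra! ht
    linarith [stepPrimitive_lt ht]
  rw [stepPrimitive_of_le ht] at hmass
  linarith

theorem ell_mark_weakly_right_of_uniform_mark
    (n : ℕ) :
    (∀ c y' : ℝ, 0 ≤ c → c ≤ y' → y' ≤ 1 →
      (∫ t in c..y', ell n t) = 1 / n → c + 1 / n ≤ y') ∧
    (∀ c t : ℝ, 0 ≤ c → c ≤ t → t ≤ 1 →
      (∫ s in c..t, ell n s) ≥ 1 / n → t - c ≥ 1 / n) := by
  rw [ell_eq_stepDensity, show (1 : ℝ) / n = 2 * (1 / (2 * n)) by ring]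
  refine ⟨fun c y' hc hcy _ hmass ↦ ?_, fun c t hc hct _ hmass ↦ ?_⟩
  · linarith [le_sub_of_le_integral_stepDensity hc hcy hmass.ge]
  · exact le_sub_of_le_integral_stepDensity hc hct hmass
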